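/- arXiv:1608.06724 — 4 statements merged into one kernel-verified Lean document; each statement's English description precedes it below -/
import Mathlib

section
/- For any Boolean function f : {0,1}^n → {0,1}, the block sensitivity of f is at most the certificate complexity of f. -/
open Finset

/-- The sensitivity of `f` at input `x`: the number of coordinates whose flip changes `f`. -/
def sensAt {ι : Type} [Fintype ι] [DecidableEq ι] (f : (ι → Bool) → Bool) (x : ι → Bool) : ℕ :=
  (Finset.univ.filter fun i => f (Function.update x i (!x i)) ≠ f x).card

/-- The sensitivity of `f`: the maximum of `sensAt f x` over all inputs `x`. -/
def sensitivity {ι : Type} [Fintype ι] [DecidableEq ι] (f : (ι → Bool) → Bool) : ℕ :=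
  Finset.univ.sup fun x => sensAt f x

/-- Flip the coordinates of `x` in the block `B`. -/
def flipBlock {ι : Type} [DecidableEq ι] (x : ι → Bool) (B : Finset ι) : ι → Bool :=
  fun i => if i ∈ B then !x i else x i

/-- The block sensitivity of `f` at `x`. -/
noncomputable def blockSensAt {ι : Type} [Fintype ι] [DecidableEq ι] (f : (ι → Bool) → Bool)
    (x : ι → Bool) : ℕ :=
  sSup {r | ∃ B : Fin r → Finset ι,
    (∀ i j, i ≠ j → Disjoint (B i) (B j)) ∧ ∀ j, f (flipBlock x (B j)) ≠ f x}

/-- The block sensitivity of `f`. -/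
noncomputable def blockSens {ι : Type} [Fintype ι] [DecidableEq ι] (f : (ι → Bool) → Bool) : ℕ :=
  Finset.univ.sup fun x => blockSensAt f x

/-- The support of a partial assignment `p : ι → Option Bool`. -/
def psupport {ι : Type} [Fintype ι] [DecidableEq ι] (p : ι → Option Bool) : Finset ι :=
  Finset.univ.filter fun i => p i ≠ none

/-- `x` is consistent with the partial assignment `p`. -/
def consistentWith {ι : Type} (x : ι → Bool) (p : ι → Option Bool) : Prop :=
  ∀ i b, p i = some b → x i = b

/-- `p` is a `b`-certificate for `f`. -/
def isCertificate {ι : Type} (f : (ι → Bool) → Bool) (p : ι → Option Bool) (b : Bool) : Prop :=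
  ∀ x, consistentWith x p → f x = b

/-- The certificate complexity of `f` at `x`. -/
noncomputable def certAt {ι : Type} [Fintype ι] [DecidableEq ι] (f : (ι → Bool) → Bool) (x : ι → Bool) : ℕ :=
  sInf {c | ∃ p, consistentWith x p ∧ isCertificate f p (f x) ∧ (psupport p).card = c}

/-- The certificate complexity of `f`. -/
noncomputable def certC {ι : Type} [Fintype ι] [DecidableEq ι] (f : (ι → Bool) → Bool) : ℕ :=
  Finset.univ.sup fun x => certAt f x

/-- The `b`-sensitivity of `f`: max of `sensAt f x` over inputs `x` with `f x = b`. -/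
def sensB {ι : Type} [Fintype ι] [DecidableEq ι] (b : Bool) (f : (ι → Bool) → Bool) : ℕ :=
  (Finset.univ.filter fun x => f x = b).sup fun x => sensAt f x

/-- The `b`-certificate complexity of `f`. -/
noncomputable def certB {ι : Type} [Fintype ι] [DecidableEq ι] (b : Bool) (f : (ι → Bool) → Bool) : ℕ :=
  (Finset.univ.filter fun x => f x = b).sup fun x => certAt f x

/-- The partial assignment obtained by permuting the coordinates of `p` by `σ`. -/
def permP {ι : Type} (σ : Equiv.Perm ι) (p : ι → Option Bool) : ι → Option Bool :=
  fun i => p (σ i)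

/-- Distance between partial assignments: number of coordinates on which both are set
and they disagree. -/
def pdist {ι : Type} [Fintype ι] [DecidableEq ι] (p p' : ι → Option Bool) : ℕ :=
  (Finset.univ.filter fun i =>
    (p i = some true ∧ p' i = some false) ∨ (p i = some false ∧ p' i = some true)).card

/-- Edges of a `k`-uniform hypergraph on vertex set `Fin n`: `k`-element subsets. -/
def Edge (n k : ℕ) : Type := {S : Finset (Fin n) // S.card = k}

instance (n k : ℕ) : DecidableEq (Edge n k) := by unfold Edge; infer_instance
instance (n k : ℕ) : Fintype (Edge n k) := by unfold Edge; infer_instance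

/-- The action of a vertex permutation on edges. -/
def edgeMap {n k : ℕ} (σ : Equiv.Perm (Fin n)) (e : Edge n k) : Edge n k :=
  ⟨e.1.image σ, by rw [Finset.card_image_of_injective _ σ.injective]; exact e.2⟩

/-- `f` is a `k`-uniform hypergraph property: it is invariant under vertex permutations. -/
def IsHypergraphProperty {n k : ℕ} (f : (Edge n k → Bool) → Bool) : Prop :=
  ∀ (σ : Equiv.Perm (Fin n)) (x : Edge n k → Bool), f (fun e => x (edgeMap σ e)) = f x

/-- The number of edges of a hypergraph given by its edge-indicator vector. -/
def edgeCount {n k : ℕ} (G : Edge n k → Bool) : ℕ :=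
  (Finset.univ.filter fun e => G e = true).card

/-- The degree of a vertex `v` in the hypergraph `G`. -/
def degree {n k : ℕ} (G : Edge n k → Bool) (v : Fin n) : ℕ :=
  (Finset.univ.filter fun e : Edge n k => G e = true ∧ v ∈ e.1).card

/-- Invariance of a `k`-partite `k`-uniform hypergraph property under independent
permutations of each coordinate. -/
def IsPartiteProperty {n k : ℕ} (f : ((Fin k → Fin n) → Bool) → Bool) : Prop :=
  ∀ (σ : Fin k → Equiv.Perm (Fin n)) (x : (Fin k → Fin n) → Bool),
    f (fun e => x fun i => σ i (e i)) = f x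

theorem blockSensAt_le_certAt (n : ℕ) (f : (Fin n → Bool) → Bool) (x : Fin n → Bool) :
    blockSensAt f x ≤ certAt f x := by
  -- the certificate set is nonempty: the full assignment works
  have hne : {c | ∃ p, consistentWith x p ∧ isCertificate f p (f x) ∧
      (psupport p).card = c}.Nonempty := by
    refine ⟨(psupport (fun i => some (x i))).card, fun i => some (x i), ?_, ?_, rfl⟩
    · intro i b hb; exact (Option.some_injective _ hb)
    · intro y hy
      have : y = x := funext fun i => hy i (x i) rfl
      rw [this]
  obtain ⟨p, hcons, hcert, hcard⟩ := Nat.sInf_mem hne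
  apply csSup_le
  · exact ⟨0, Fin.elim0, fun i => i.elim0, fun j => j.elim0⟩
  rintro r ⟨B, hdisj, hsens⟩
  -- each block meets the support of p
  have hmeet : ∀ j : Fin r, ∃ i, i ∈ B j ∩ psupport p := by
    intro j
    by_contra h
    push_neg at h
    apply hsens j
    apply hcert
    intro i b hb
    have hiS : i ∈ psupport p := by
      simp [psupport, hb]
    have hiB : i ∉ B j := fun hiB => h i (Finset.mem_inter.mpr ⟨hiB, hiS⟩)
    have : flipBlock x (B j) i = x i := by simp [flipBlock, hiB]
    rw [this]; exact hcons i b hb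
  choose g hg using hmeet
  have hinj : Set.InjOn g (Finset.univ : Finset (Fin r)) := by
    intro i _ j _ hij
    by_contra hne'
    have h1 := (Finset.mem_inter.mp (hg i)).1
    have h2 := (Finset.mem_inter.mp (hg j)).1
    rw [hij] at h1
    exact (Finset.disjoint_left.mp (hdisj i j hne')) h1 h2
  have := Finset.card_le_card_of_injOn g
    (fun j _ => (Finset.mem_inter.mp (hg j)).2) hinj
  rw [Finset.card_fin] at this
  rw [hcard] at this
  exact this

/-- bs(f) ≤ C(f). -/
theorem blockSens_le_certC (n : ℕ) (f : (Fin n → Bool) → Bool) :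
    blockSens f ≤ certC f := by
  apply Finset.sup_le
  intro x _
  exact le_trans (blockSensAt_le_certAt n f x) (Finset.le_sup (Finset.mem_univ x))
end

section
/- If f : {0,1}^n → {0,1} is a nonconstant symmetric Boolean function (invariant under all permutations of input coordinates), then s(f) ≥ n/2. -/
open Finset

/-! If flipping coordinate `i` at `x` changes a symmetric `f`, then so does flipping any `j` with
`x j = x i`, because the two flipped inputs differ by the transposition `(i j)`. Applying this at `x`
and at its neighbour `y`, the coordinates where `x` agrees with `x i` and those where `y` agrees with
`y i = !x i` cover each coordinate once and `i` twice, so `sensAt f x + sensAt f y ≥ n + 1`.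
A nonconstant `f` has such a sensitive edge because the cube is connected. -/

open Function

section

variable {ι : Type}

def IsSymmetric (f : (ι → Bool) → Bool) : Prop :=
  ∀ (σ : Equiv.Perm ι) (x : ι → Bool), f (x ∘ σ) = f x

variable [DecidableEq ι]

theorem IsSymmetric.apply_update_not_eq {f : (ι → Bool) → Bool} (hf : IsSymmetric f)
    {x : ι → Bool} {i j : ι} (hij : x j = x i) :
    f (update x j (!x j)) = f (update x i (!x i)) := by
  rw [← hf (Equiv.swap i j)]
  congr 1
  ext k
  simp only [comp_apply, update_apply, Equiv.swap_apply_def]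
  split_ifs <;> simp_all

theorem flipBlock_empty (x : ι → Bool) : flipBlock x ∅ = x := by
  ext j
  simp [flipBlock]

theorem flipBlock_insert (x : ι → Bool) {s : Finset ι} {a : ι} (ha : a ∉ s) :
    flipBlock x (insert a s) = update (flipBlock x s) a (!flipBlock x s a) := by
  ext j
  by_cases hj : j = a
  · subst hj
    simp [flipBlock, ha]
  · simp [flipBlock, hj]

variable [Fintype ι]

theorem sensAt_le_sensitivity (f : (ι → Bool) → Bool) (x : ι → Bool) :
    sensAt f x ≤ sensitivity f :=
  le_sup (mem_univ x)

theorem flipBlock_filter_ne (x y : ι → Bool) : flipBlock x (univ.filter fun i => x i ≠ y i) = y := by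
  ext i
  cases hx : x i <;> cases hy : y i <;> simp [flipBlock, hx, hy]

theorem eq_of_forall_update_not_eq {f : (ι → Bool) → Bool}
    (hf : ∀ x i, f (update x i (!x i)) = f x) (x y : ι → Bool) : f x = f y := by
  have hblock : ∀ s, f (flipBlock x s) = f x := by
    intro s
    induction s using Finset.induction_on with
    | empty => rw [flipBlock_empty]
    | insert a s ha ih => rw [flipBlock_insert x ha, hf, ih]
  rw [← flipBlock_filter_ne x y, hblock]

theorem filter_update_eq_insert (x : ι → Bool) (i : ι) (b : Bool) :
    univ.filter (fun j => update x i b j = b) = insert i (univ.filter fun j => x j = b) := by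
  ext j
  by_cases hj : j = i
  · subst hj
    simp
  · simp [hj]

namespace IsSymmetric

variable {f : (ι → Bool) → Bool}

theorem card_filter_eq_le_sensAt (hf : IsSymmetric f) {x : ι → Bool} {i : ι}
    (h : f (update x i (!x i)) ≠ f x) : #(univ.filter fun j => x j = x i) ≤ sensAt f x := by
  apply card_le_card
  intro j hj
  simp only [mem_filter, mem_univ, true_and] at hj ⊢
  rwa [hf.apply_update_not_eq hj]

theorem card_lt_two_mul_sensitivity (hf : IsSymmetric f) (hnc : ∃ x y, f x ≠ f y) :
    Fintype.card ι < 2 * sensitivity f := by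
  obtain ⟨x, i, hxi⟩ : ∃ x i, f (update x i (!x i)) ≠ f x := by
    by_contra! h
    obtain ⟨x, y, hxy⟩ := hnc
    exact hxy (eq_of_forall_update_not_eq h x y)
  set y := update x i (!x i)
  have hyi : f (update y i (!y i)) ≠ f y := by simpa [y] using hxi.symm
  have hcount : #(univ.filter fun j => x j = x i) + #(univ.filter fun j => y j = y i)
      = Fintype.card ι + 1 := by
    simp only [y, update_self, filter_update_eq_insert]
    rw [card_insert_of_notMem (by simp), ← add_assoc]
    simp only [Bool.eq_not_iff, ← card_univ]
    rw [card_filter_add_card_filter_not]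
  have := hf.card_filter_eq_le_sensAt hxi
  have := hf.card_filter_eq_le_sensAt hyi
  have := sensAt_le_sensitivity f x
  have := sensAt_le_sensitivity f y
  omega

end IsSymmetric

end

/-- a nonconstant symmetric Boolean function has sensitivity ≥ n/2. -/
theorem symmetric_sensitivity (n : ℕ) (f : (Fin n → Bool) → Bool)
    (hsym : ∀ (σ : Equiv.Perm (Fin n)) (x : Fin n → Bool), f (fun i => x (σ i)) = f x)
    (hnc : ∃ x y, f x ≠ f y) :
    (n : ℝ) / 2 ≤ (sensitivity f : ℝ) := by
  have h := IsSymmetric.card_lt_two_mul_sensitivity hsym hnc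
  rw [Fintype.card_fin] at h
  rw [div_le_iff₀ two_pos]
  exact_mod_cast (by omega : n ≤ sensitivity f * 2)
end

section
/- Let f be a minterm function defined by partial assignment p under group G. If x satisfies f(x) = 0, then s(f,x) is at most the maximum cardinality of a family of partial assignments {σ_1(p), ..., σ_r(p)} (σ_j ∈ G) such that the pairwise distance dist(σ_i(p), σ_j(p)) ≤ 2 for all i, j. -/
open Finset

/-- for a minterm function with f(x)=0, s(f,x) is at most the maximum size
of a family of distinct σ(p)'s with pairwise distance at most 2. -/
theorem minterm_zero_sens_le_family (n : ℕ) (G : Subgroup (Equiv.Perm (Fin n)))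
    (p : Fin n → Option Bool) (f : (Fin n → Bool) → Bool)
    (hf : ∀ x, f x = true ↔ ∃ σ ∈ G, consistentWith x (permP σ p))
    (x : Fin n → Bool) (hx : f x = false) :
    sensAt f x ≤ sSup {r | ∃ q : Fin r → (Fin n → Option Bool),
      Function.Injective q ∧ (∀ j, ∃ σ ∈ G, q j = permP σ p) ∧
      ∀ i j, pdist (q i) (q j) ≤ 2} := by
  classical
  set S := Finset.univ.filter fun i => f (Function.update x i (!x i)) ≠ f x with hS
  have hmem : ∀ i ∈ S, ∃ σ ∈ G, consistentWith (Function.update x i (!x i)) (permP σ p) := by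
    intro i hi
    simp only [hS, Finset.mem_filter] at hi
    have ht : f (Function.update x i (!x i)) = true := by
      cases h : f (Function.update x i (!x i)) with
      | false => exact absurd (h.trans hx.symm) hi.2
      | true => rfl
    exact (hf _).mp ht
  choose! σ hσG hσc using hmem
  set g : Fin n → (Fin n → Option Bool) := fun i => permP (σ i) p with hg
  have hagree : ∀ i ∈ S, ∀ t b, g i t = some b → t ≠ i → x t = b := by
    intro i hi t b ht hti
    have := hσc i hi t b ht
    rwa [Function.update_of_ne hti] at this
  have hninc : ∀ i ∈ S, ¬ consistentWith x (g i) := by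
    intro i hi hc
    have : f x = true := (hf x).mpr ⟨σ i, hσG i hi, hc⟩
    simp [hx] at this
  have hflip : ∀ i ∈ S, ∃ b, g i i = some b ∧ x i ≠ b := by
    intro i hi
    by_contra hcon
    push_neg at hcon
    apply hninc i hi
    intro t b ht
    by_cases hti : t = i
    · subst hti; exact hcon b ht
    · exact hagree i hi t b ht hti
  have ginj : Set.InjOn g S := by
    intro i hi j hj hij
    by_contra hne
    obtain ⟨b, hb, hxb⟩ := hflip i hi
    exact hxb (hagree j hj i b (hij ▸ hb) hne)
  have hdist : ∀ i ∈ S, ∀ j ∈ S, pdist (g i) (g j) ≤ 2 := by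
    intro i hi j hj
    unfold pdist
    have hsub : (Finset.univ.filter fun t => (g i t = some true ∧ g j t = some false)
        ∨ (g i t = some false ∧ g j t = some true)) ⊆ {i, j} := by
      intro t ht
      simp only [Finset.mem_filter] at ht
      simp only [Finset.mem_insert, Finset.mem_singleton]
      by_contra hcon
      push_neg at hcon
      rcases ht.2 with ⟨h1, h2⟩ | ⟨h1, h2⟩
      · have e1 := hagree i hi t true h1 hcon.1
        have e2 := hagree j hj t false h2 hcon.2
        simp [e1] at e2
      · have e1 := hagree i hi t false h1 hcon.1
        have e2 := hagree j hj t true h2 hcon.2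
        simp [e1] at e2
    calc _ ≤ ({i, j} : Finset (Fin n)).card := Finset.card_le_card hsub
      _ ≤ 2 := by
          refine le_trans (Finset.card_insert_le _ _) ?_
          simp
  have hbdd : BddAbove {r | ∃ q : Fin r → (Fin n → Option Bool),
      Function.Injective q ∧ (∀ j, ∃ σ ∈ G, q j = permP σ p) ∧
      ∀ i j, pdist (q i) (q j) ≤ 2} := by
    refine ⟨Fintype.card (Fin n → Option Bool), ?_⟩
    rintro r ⟨q, hq, -, -⟩
    simpa using Fintype.card_le_of_injective q hq
  have hcard : sensAt f x = S.card := rfl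
  rw [hcard]
  apply le_csSup hbdd
  refine ⟨fun j => g (S.orderIsoOfFin rfl j), ?_, ?_, ?_⟩
  · intro a b hab
    have := ginj ((S.orderIsoOfFin rfl a).2) ((S.orderIsoOfFin rfl b).2) hab
    exact (S.orderIsoOfFin rfl).injective (Subtype.ext this)
  · intro j
    exact ⟨σ (S.orderIsoOfFin rfl j), hσG _ ((S.orderIsoOfFin rfl j).2), rfl⟩
  · intro a b
    exact hdist _ ((S.orderIsoOfFin rfl a).2) _ ((S.orderIsoOfFin rfl b).2)
end

section
/- For any transitive Abelian group G ≤ S_n, there exists a non-constant Boolean function f : {0,1}^n → {0,1} invariant under G with s(f) ≤ α · n^{1/3}, where α depends only on the number l of cyclic factors of G. -/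
set_option maxHeartbeats 1000000


open Finset

namespace AbSens

variable {A : Type} [Fintype A] [DecidableEq A] [AddCommGroup A]

/-- three conflicts between the pattern and its `d`-shift -/
def C3 (S : Finset A) (v : A → Bool) (d : A) : Prop :=
  ∃ q1 q2 q3 : A, q1 ≠ q2 ∧ q1 ≠ q3 ∧ q2 ≠ q3 ∧
    (∀ q, q = q1 ∨ q = q2 ∨ q = q3 → q ∈ S ∧ q + d ∈ S ∧ v (q + d) ≠ v q)

/-- pattern is invariant under the `d`-shift -/
def TI (S : Finset A) (v : A → Bool) (d : A) : Prop :=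
  (∀ q, q ∈ S ↔ q + d ∈ S) ∧ (∀ q, v (q + d) = v q)

variable (S : Finset A) (v : A → Bool)

/-- the minterm function of the pattern `(S, v)` -/
def mt (x : A → Bool) : Bool := decide (∃ b : A, ∀ q ∈ S, x (b + q) = v q)

variable {S v}

lemma mt_shift (g : A) (x : A → Bool) : mt S v (fun a => x (g + a)) = mt S v x := by
  simp only [mt, decide_eq_decide]
  constructor
  · rintro ⟨b, hb⟩
    exact ⟨g + b, fun q hq => by rw [add_assoc]; exact hb q hq⟩
  · rintro ⟨b, hb⟩
    exact ⟨b - g, fun q hq => by rw [show g + (b - g + q) = b + q by abel]; exact hb q hq⟩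

lemma mt_pattern_true : mt S v (fun a => if a ∈ S then v a else false) = true := by
  simp only [mt, decide_eq_true_eq]
  exact ⟨0, fun q hq => by rw [zero_add, if_pos hq]⟩

lemma mt_nonconstant (hne : S.Nonempty) : ∃ x y, mt S v x ≠ mt S v y := by
  by_cases hone : ∃ q ∈ S, v q = true
  · obtain ⟨q0, hq0, hv0⟩ := hone
    refine ⟨(fun a => if a ∈ S then v a else false), (fun _ => false), ?_⟩
    rw [mt_pattern_true]
    intro h
    have h' : mt S v (fun _ => false) = true := h.symm
    simp only [mt, decide_eq_true_eq] at h'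
    obtain ⟨b, hb⟩ := h'
    have := hb q0 hq0
    rw [hv0] at this
    exact Bool.false_ne_true this
  · obtain ⟨q0, hq0⟩ := hne
    refine ⟨(fun a => if a ∈ S then v a else false), (fun _ => true), ?_⟩
    rw [mt_pattern_true]
    intro h
    have h' : mt S v (fun _ => true) = true := h.symm
    simp only [mt, decide_eq_true_eq] at h'
    obtain ⟨b, hb⟩ := h'
    have := hb q0 hq0
    have hv : v q0 = false := by
      cases hvq : v q0
      · rfl
      · exact absurd ⟨q0, hq0, hvq⟩ hone
    rw [hv] at this
    simp at this

/-- sensitivity at a 1-input is at most the support size -/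
lemma sensAt_true {x : A → Bool} (hx : mt S v x = true) : sensAt (mt S v) x ≤ S.card := by
  simp only [mt, decide_eq_true_eq] at hx
  obtain ⟨b, hb⟩ := hx
  refine le_trans (Finset.card_le_card (fun i hi => ?_)) (Finset.card_image_le (f := fun q => b + q))
  rw [Finset.mem_filter] at hi
  by_contra hnot
  apply hi.2
  have hne : ∀ q ∈ S, b + q ≠ i := by
    intro q hq h
    exact hnot (Finset.mem_image.mpr ⟨q, hq, h⟩)
  have h1 : mt S v (Function.update x i (!x i)) = true := by
    simp only [mt, decide_eq_true_eq]
    exact ⟨b, fun q hq => by rw [Function.update_of_ne (hne q hq)]; exact hb q hq⟩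
  have h2 : mt S v x = true := by
    simp only [mt, decide_eq_true_eq]; exact ⟨b, hb⟩
  rw [h1, h2]

/-- near-match of `x` at shift `b` with sole violation `j` -/
def Near (x : A → Bool) (b j : A) : Prop :=
  j - b ∈ S ∧ x j ≠ v (j - b) ∧ ∀ q ∈ S, q ≠ j - b → x (b + q) = v q

lemma near_of_sensitive {x : A → Bool} (hx : mt S v x = false) {j : A}
    (hj : mt S v (Function.update x j (!x j)) ≠ mt S v x) : ∃ b, Near (S := S) (v := v) x b j := by
  have hup : mt S v (Function.update x j (!x j)) = true := by
    rw [hx] at hj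
    exact Bool.ne_false_iff.mp hj
  simp only [mt, decide_eq_true_eq] at hup
  simp only [mt, decide_eq_false_iff_not] at hx
  obtain ⟨b, hb⟩ := hup
  have hjb : j - b ∈ S := by
    by_contra hnot
    apply hx
    refine ⟨b, fun q hq => ?_⟩
    have hne : b + q ≠ j := by
      intro h
      apply hnot
      rw [← h, add_sub_cancel_left]
      exact hq
    rw [← Function.update_of_ne hne (!x j) x]
    exact hb q hq
  refine ⟨b, hjb, ?_, ?_⟩
  · have := hb (j - b) hjb
    rw [show b + (j - b) = j by abel, Function.update_self] at this
    rw [← this]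
    cases x j <;> simp
  · intro q hq hne
    have hne' : b + q ≠ j := by
      intro h
      apply hne
      rw [← h, add_sub_cancel_left]
    rw [← Function.update_of_ne hne' (!x j) x]
    exact hb q hq

lemma near_unique {x : A → Bool} {b j j' : A} (h1 : Near (S := S) (v := v) x b j)
    (h2 : Near (S := S) (v := v) x b j') : j = j' := by
  by_contra hne
  have hq : j' - b ≠ j - b := fun h => hne (by
    have := congrArg (· + b) h
    simpa [sub_add_cancel] using this.symm)
  have := h1.2.2 (j' - b) h2.1 hq
  rw [show b + (j' - b) = j' by abel] at this
  exact h2.2.1 this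

lemma near_conflict {x : A → Bool} {b b' j j' : A} (hN : Near (S := S) (v := v) x b j)
    (hN' : Near (S := S) (v := v) x b' j') (_hjj : j ≠ j')
    (hc3 : C3 S v (b' - b)) : False := by
  obtain ⟨q1, q2, q3, h12, h13, h23, hq⟩ := hc3
  have key : ∀ q, q = q1 ∨ q = q2 ∨ q = q3 → b' + q = j ∨ b' + q = j' := by
    intro q hq'
    obtain ⟨hqS, hqdS, hv⟩ := hq q hq'
    by_contra hcon
    push_neg at hcon
    have e1 : x (b' + q) = v q := by
      refine hN'.2.2 q hqS (fun h => hcon.2 ?_)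
      rw [h]; abel
    have e2 : x (b' + q) = v (q + (b' - b)) := by
      have h3 := hN.2.2 (q + (b' - b)) hqdS (fun h => hcon.1 (by
        have : b + (q + (b' - b)) = b + (j - b) := by rw [h]
        rw [show b + (q + (b' - b)) = b' + q by abel, show b + (j - b) = j by abel] at this
        exact this))
      rw [show b + (q + (b' - b)) = b' + q by abel] at h3
      exact h3
    exact hv (e2 ▸ e1 ▸ rfl)
  have k1 := key q1 (Or.inl rfl)
  have k2 := key q2 (Or.inr (Or.inl rfl))
  have k3 := key q3 (Or.inr (Or.inr rfl))
  rcases k1 with k1 | k1 <;> rcases k2 with k2 | k2 <;> rcases k3 with k3 | k3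
  · exact h12 (add_left_cancel (k1.trans k2.symm))
  · exact h12 (add_left_cancel (k1.trans k2.symm))
  · exact h13 (add_left_cancel (k1.trans k3.symm))
  · exact h23 (add_left_cancel (k2.trans k3.symm))
  · exact h23 (add_left_cancel (k2.trans k3.symm))
  · exact h13 (add_left_cancel (k1.trans k3.symm))
  · exact h12 (add_left_cancel (k1.trans k2.symm))
  · exact h12 (add_left_cancel (k1.trans k2.symm))

lemma near_TI {x : A → Bool} {b b' j j' : A} (hN : Near (S := S) (v := v) x b j)
    (hN' : Near (S := S) (v := v) x b' j') (hti : TI S v (b' - b)) : j = j' := by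
  obtain ⟨hmem, hval⟩ := hti
  set d := b' - b with hd
  have hN'' : Near (S := S) (v := v) x b j' := by
    obtain ⟨h1', h2', h3'⟩ := hN'
    refine ⟨?_, ?_, ?_⟩
    · rw [show j' - b = (j' - b') + d by rw [hd]; abel]
      exact (hmem _).mp h1'
    · have e : v (j' - b) = v (j' - b') := by
        rw [show j' - b = (j' - b') + d by rw [hd]; abel]
        exact hval _
      rw [e]; exact h2'
    · intro q hq hne
      have hqd : q - d ∈ S := by
        have h4 := hmem (q - d)
        rw [show q - d + d = q by abel] at h4
        exact h4.mpr hq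
      have hne' : q - d ≠ j' - b' := by
        intro h
        apply hne
        have : q - d + d = (j' - b') + d := by rw [h]
        rw [show q - d + d = q by abel, show j' - b' + d = j' - b by rw [hd]; abel] at this
        exact this
      have h5 := h3' (q - d) hqd hne'
      rw [show b' + (q - d) = b + q by rw [hd]; abel] at h5
      have h6 : v q = v (q - d) := by
        conv_lhs => rw [show q = q - d + d by abel]
        exact hval _
      rw [h5, h6]
  exact near_unique hN hN''

/-- main 0-side bound: sensitivity at a 0-input, times the box size, is at most `|A|`. -/
lemma sensAt_false {x : A → Bool} (hx : mt S v x = false) (Sm : A → Prop) (Box : Finset A)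
    (hgood : ∀ d, Sm d → d ≠ 0 → C3 S v d ∨ TI S v d)
    (hboxsm : ∀ c ∈ Box, ∀ c' ∈ Box, Sm (c - c')) :
    sensAt (mt S v) x * Box.card ≤ Fintype.card A := by
  classical
  set T := Finset.univ.filter fun i => mt S v (Function.update x i (!x i)) ≠ mt S v x with hT
  have hnear : ∀ j ∈ T, ∃ b, Near (S := S) (v := v) x b j := by
    intro j hj
    rw [hT, Finset.mem_filter] at hj
    exact near_of_sensitive hx hj.2
  choose! w hw using hnear
  have hcard : sensAt (mt S v) x * Box.card = (T ×ˢ Box).card := by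
    rw [Finset.card_product]; rfl
  rw [hcard]
  have := Finset.card_le_card_of_injOn (f := fun p : A × A => w p.1 + p.2)
    (s := T ×ˢ Box) (t := Finset.univ) (fun a _ => Finset.mem_univ _) ?_
  · simpa using this
  · rintro ⟨j1, c1⟩ hp1 ⟨j2, c2⟩ hp2 heq
    simp only [Finset.mem_coe, Finset.mem_product] at hp1 hp2
    simp only at heq
    by_cases hww : w j1 = w j2
    · have hj : j1 = j2 := near_unique (hw j1 hp1.1) (hww ▸ hw j2 hp2.1)
      have hc : c1 = c2 := by
        rw [hww] at heq
        exact add_left_cancel heq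
      rw [hj, hc]
    · exfalso
      have hdeq : c1 - c2 = w j2 - w j1 := by
        have : w j1 + c1 - (w j2 + c2) = 0 := by rw [heq]; abel
        have h2 : c1 - c2 - (w j2 - w j1) = 0 := by rw [← this]; abel
        have := sub_eq_zero.mp h2
        exact this
      have hsm : Sm (w j2 - w j1) := hdeq ▸ hboxsm c1 hp1.2 c2 hp2.2
      have hdne : w j2 - w j1 ≠ 0 := fun h => hww (sub_eq_zero.mp h).symm
      have hjne : j1 ≠ j2 := fun h => hww (by rw [h])
      rcases hgood _ hsm hdne with hg | hg
      · exact near_conflict (hw j1 hp1.1) (hw j2 hp2.1) hjne hg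
      · exact hww (by rw [near_TI (hw j1 hp1.1) (hw j2 hp2.1) hg] at hjne; exact absurd rfl hjne)

/-- global sensitivity bound for the minterm function -/
lemma sens_mt_le (Sm : A → Prop) (Box : Finset A) (Q : ℕ)
    (hgood : ∀ d, Sm d → d ≠ 0 → C3 S v d ∨ TI S v d)
    (hboxsm : ∀ c ∈ Box, ∀ c' ∈ Box, Sm (c - c'))
    (hbpos : 0 < Box.card)
    (hQ : Fintype.card A ≤ Box.card * Q) :
    sensitivity (mt S v) ≤ max S.card Q := by
  apply Finset.sup_le
  intro x _
  cases hx : mt S v x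
  · refine le_trans ?_ (le_max_right _ _)
    have h1 := sensAt_false hx Sm Box hgood hboxsm
    have h2 : sensAt (mt S v) x * Box.card ≤ Box.card * Q := le_trans h1 hQ
    rw [mul_comm (Box.card) Q] at h2
    exact Nat.le_of_mul_le_mul_right h2 hbpos
  · exact le_trans (sensAt_true hx) (le_max_left _ _)

end AbSens

namespace AbSens

/-! ### cube root -/

def cb (M : ℕ) : ℕ := ((Finset.range (M+1)).filter (fun r => r^3 ≤ M)).max' ⟨0, by simp⟩

lemma cb_cube_le (M : ℕ) : (cb M)^3 ≤ M := by
  have := Finset.max'_mem ((Finset.range (M+1)).filter (fun r => r^3 ≤ M)) ⟨0, by simp⟩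
  exact (Finset.mem_filter.mp this).2

lemma le_cb {M r : ℕ} (h : r^3 ≤ M) : r ≤ cb M := by
  apply Finset.le_max'
  refine Finset.mem_filter.mpr ⟨Finset.mem_range.mpr ?_, h⟩
  rcases Nat.eq_zero_or_pos r with h0 | h0
  · omega
  · have : r ≤ r^3 := Nat.le_self_pow (by norm_num) r
    omega

/-! ### the pattern over ℕ -/

variable (r : ℕ)

def runO : Finset ℕ := Finset.Icc 3 (4*r+3)
def apO : Finset ℕ := (Finset.Icc 1 r).image fun j => 4*r+3+j*r
def Opat : Finset ℕ := runO r ∪ apO r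
def frontZ : Finset ℕ := {0,1,2}
def apZ : Finset ℕ := ((Finset.Icc 1 r) ×ˢ (Finset.Icc 1 3)).image fun p => 4*r+3+p.1*r+p.2
def Zpat : Finset ℕ := frontZ ∪ apZ r
def Spat : Finset ℕ := Opat r ∪ Zpat r

lemma mem_runO {q : ℕ} : q ∈ runO r ↔ 3 ≤ q ∧ q ≤ 4*r+3 := Finset.mem_Icc

lemma mem_apO {q : ℕ} : q ∈ apO r ↔ ∃ j, 1 ≤ j ∧ j ≤ r ∧ q = 4*r+3+j*r := by
  simp only [apO, Finset.mem_image, Finset.mem_Icc]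
  constructor
  · rintro ⟨j, ⟨h1, h2⟩, rfl⟩; exact ⟨j, h1, h2, rfl⟩
  · rintro ⟨j, h1, h2, rfl⟩; exact ⟨j, ⟨h1, h2⟩, rfl⟩

lemma mem_apZ {q : ℕ} : q ∈ apZ r ↔ ∃ j e, 1 ≤ j ∧ j ≤ r ∧ 1 ≤ e ∧ e ≤ 3 ∧ q = 4*r+3+j*r+e := by
  simp only [apZ, Finset.mem_image, Finset.mem_product, Finset.mem_Icc, Prod.exists]
  constructor
  · rintro ⟨j, e, ⟨⟨h1, h2⟩, ⟨h3, h4⟩⟩, rfl⟩; exact ⟨j, e, h1, h2, h3, h4, rfl⟩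
  · rintro ⟨j, e, h1, h2, h3, h4, rfl⟩; exact ⟨j, e, ⟨⟨h1, h2⟩, ⟨h3, h4⟩⟩, rfl⟩

lemma mem_frontZ {q : ℕ} : q ∈ frontZ ↔ q ≤ 2 := by
  simp only [frontZ, Finset.mem_insert, Finset.mem_singleton]; omega

variable {r}

lemma jr_ge {j : ℕ} (hj : 1 ≤ j) : r ≤ j*r := by
  calc r = 1*r := (one_mul r).symm
  _ ≤ j*r := Nat.mul_le_mul_right r hj

lemma jr_le {j : ℕ} (hj : j ≤ r) : j*r ≤ r*r := Nat.mul_le_mul_right r hj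

lemma O_Z_disj (hr : 4 ≤ r) {a : ℕ} (hO : a ∈ Opat r) (hZ : a ∈ Zpat r) : False := by
  rcases Finset.mem_union.mp hO with h1 | h1 <;> rcases Finset.mem_union.mp hZ with h2 | h2
  · rw [mem_runO] at h1; rw [mem_frontZ] at h2; omega
  · rw [mem_runO] at h1
    obtain ⟨j, e, hj1, hj2, he1, he3, rfl⟩ := (mem_apZ r).mp h2
    have := jr_ge (r := r) hj1; omega
  · obtain ⟨j, hj1, hj2, rfl⟩ := (mem_apO r).mp h1
    rw [mem_frontZ] at h2; omega
  · obtain ⟨j, hj1, hj2, rfl⟩ := (mem_apO r).mp h1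
    obtain ⟨j', e, hj1', hj2', he1, he3, heq⟩ := (mem_apZ r).mp h2
    have heq' : j*r = j'*r + e := by omega
    rcases Nat.lt_or_ge j' j with h3 | h3
    · have h5 : j'*r + r ≤ j*r := by
        calc j'*r + r = (j'+1)*r := by ring
        _ ≤ j*r := Nat.mul_le_mul_right r h3
      omega
    · have := Nat.mul_le_mul_right r h3
      omega

lemma Spat_le {a : ℕ} (ha : a ∈ Spat r) : a ≤ r*r + 4*r + 6 := by
  rcases Finset.mem_union.mp ha with h | h
  · rcases Finset.mem_union.mp h with h1 | h1
    · rw [mem_runO] at h1; omega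
    · obtain ⟨j, hj1, hj2, rfl⟩ := (mem_apO r).mp h1
      have := jr_le (r := r) hj2; omega
  · rcases Finset.mem_union.mp h with h1 | h1
    · rw [mem_frontZ] at h1; omega
    · obtain ⟨j, e, hj1, hj2, he1, he3, rfl⟩ := (mem_apZ r).mp h1
      have := jr_le (r := r) hj2; omega

lemma O_sub_S {a : ℕ} (h : a ∈ Opat r) : a ∈ Spat r := Finset.mem_union_left _ h
lemma Z_sub_S {a : ℕ} (h : a ∈ Zpat r) : a ∈ Spat r := Finset.mem_union_right _ h

/-- agreement: every `t ∈ [1, r²]` has a pair of ones at distance `t`. -/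
lemma agreeNat (hr : 4 ≤ r) {t : ℕ} (h1 : 1 ≤ t) (h2 : t ≤ r*r) :
    ∃ q, q ∈ Opat r ∧ q + t ∈ Opat r := by
  have hd := Nat.div_add_mod t r
  have hm : t % r < r := Nat.mod_lt _ (by omega)
  refine ⟨4*r+3 - t % r, ?_, ?_⟩
  · exact Finset.mem_union_left _ ((mem_runO r).mpr (by omega))
  · have hc : (t/r)*r = r*(t/r) := Nat.mul_comm _ _
    have key : 4*r+3 - t % r + t = 4*r+3 + (t/r)*r := by omega
    rw [key]
    rcases Nat.eq_zero_or_pos (t/r) with h3 | h3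
    · rw [h3]; exact Finset.mem_union_left _ ((mem_runO r).mpr (by omega))
    · have hle : t/r ≤ r := by
        rcases Nat.lt_or_ge r (t/r) with h4 | h4
        · have h5 : r*(r+1) ≤ r*(t/r) := Nat.mul_le_mul_left r h4
          have h6 : r*(r+1) = r*r + r := by ring
          omega
        · exact h4
      exact Finset.mem_union_right _ ((mem_apO r).mpr ⟨t/r, h3, hle, rfl⟩)

/-- The conflict property for one position. -/
def ConflP (r t q : ℕ) : Prop :=
  q ∈ Spat r ∧ q + t ∈ Spat r ∧ ¬ ((q ∈ Opat r) ↔ (q + t ∈ Opat r))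

lemma conflP_OZ (hr : 4 ≤ r) {t q : ℕ} (h1 : q ∈ Opat r) (h2 : q + t ∈ Zpat r) : ConflP r t q := by
  refine ⟨O_sub_S h1, Z_sub_S h2, ?_⟩
  intro hiff
  exact O_Z_disj hr (hiff.mp h1) h2

lemma conflP_ZO (hr : 4 ≤ r) {t q : ℕ} (h1 : q ∈ Zpat r) (h2 : q + t ∈ Opat r) : ConflP r t q := by
  refine ⟨Z_sub_S h1, O_sub_S h2, ?_⟩
  intro hiff
  exact O_Z_disj hr (hiff.mpr h2) h1

/-- helper: distinct residues -/
lemma mod_ne {a b r : ℕ} (hr : 0 < r) (hab : a < b) (hd : b - a < r) : ¬ (a % r = b % r) := by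
  intro h
  have h1 := Nat.div_add_mod a r
  have h2 := Nat.div_add_mod b r
  rcases Nat.lt_or_ge (a/r) (b/r) with h3 | h3
  · have h5 : r*(a/r) + r ≤ r*(b/r) := by
      calc r*(a/r) + r = r*(a/r + 1) := by ring
      _ ≤ r*(b/r) := Nat.mul_le_mul_left r h3
    omega
  · have := Nat.mul_le_mul_left r h3
    omega

/-- three conflicts for every `t ∈ [1, r²]`. -/
lemma conflNat (hr : 4 ≤ r) {t : ℕ} (h1 : 1 ≤ t) (h2 : t ≤ r*r) :
    ∃ q1 q2 q3, q1 ≠ q2 ∧ q1 ≠ q3 ∧ q2 ≠ q3 ∧ ConflP r t q1 ∧ ConflP r t q2 ∧ ConflP r t q3 := by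
  have hrr : 4*4 ≤ r*r := Nat.mul_le_mul hr hr
  rcases Nat.lt_or_ge t 4 with hcase | hcase
  · -- t ∈ {1,2,3} : AP ones against AP zeros
    have key : ∀ k, 1 ≤ k → k ≤ 3 → ConflP r t (4*r+3+k*r) := by
      intro k hk1 hk3
      refine conflP_OZ hr (Finset.mem_union_right _ ((mem_apO r).mpr ⟨k, hk1, by omega, rfl⟩))
        (Finset.mem_union_right _ ((mem_apZ r).mpr ⟨k, t, hk1, by omega, h1, by omega, by ring⟩))
    refine ⟨4*r+3+1*r, 4*r+3+2*r, 4*r+3+3*r, by omega, by omega, by omega,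
      key 1 (by omega) (by omega), key 2 (by omega) (by omega), key 3 (by omega) (by omega)⟩
  · rcases Nat.lt_or_ge (4*r+1) t with hcase2 | hcase2
    · -- t ∈ [4r+2, r²] : run ones against AP zeros
      have key : ∀ e, 1 ≤ e → e ≤ 3 → ConflP r t (4*r+3 - (t-e) % r) := by
      { intro e he1 he3
        have hd := Nat.div_add_mod (t-e) r
        have hm : (t-e) % r < r := Nat.mod_lt _ (by omega)
        have hc : ((t-e)/r)*r = r*((t-e)/r) := Nat.mul_comm _ _
        have hjge : 1 ≤ (t-e)/r := by
          rcases Nat.eq_zero_or_pos ((t-e)/r) with h3 | h3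
          · rw [h3] at hd; simp at hd; omega
          · exact h3
        have hjle : (t-e)/r ≤ r := by
          rcases Nat.lt_or_ge r ((t-e)/r) with h4 | h4
          · have h5 : r*(r+1) ≤ r*((t-e)/r) := Nat.mul_le_mul_left r h4
            have h6 : r*(r+1) = r*r + r := by ring
            omega
          · exact h4
        refine conflP_OZ hr (Finset.mem_union_left _ ((mem_runO r).mpr (by omega)))
          (Finset.mem_union_right _ ((mem_apZ r).mpr ⟨(t-e)/r, e, hjge, hjle, he1, he3, by omega⟩)) }
      have hm1 : (t-1) % r < r := Nat.mod_lt _ (by omega)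
      have hm2 : (t-2) % r < r := Nat.mod_lt _ (by omega)
      have hm3 : (t-3) % r < r := Nat.mod_lt _ (by omega)
      have h12 : ¬ ((t-2) % r = (t-1) % r) := mod_ne (by omega) (by omega) (by omega)
      have h13 : ¬ ((t-3) % r = (t-1) % r) := mod_ne (by omega) (by omega) (by omega)
      have h23 : ¬ ((t-3) % r = (t-2) % r) := mod_ne (by omega) (by omega) (by omega)
      exact ⟨4*r+3 - (t-1) % r, 4*r+3 - (t-2) % r, 4*r+3 - (t-3) % r,
        by omega, by omega, by omega,
        key 1 (by omega) (by omega), key 2 (by omega) (by omega), key 3 (by omega) (by omega)⟩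
    · -- t ∈ [4, 4r+1] : front zeros against run ones
      have key : ∀ q, q ≤ 2 → ConflP r t q := by
        intro q hq
        exact conflP_ZO hr (Finset.mem_union_left _ ((mem_frontZ).mpr hq))
          (Finset.mem_union_left _ ((mem_runO r).mpr (by omega)))
      exact ⟨0, 1, 2, by omega, by omega, by omega,
        key 0 (by omega), key 1 (by omega), key 2 (by omega)⟩

/-- card bound -/
lemma Spat_card : (Spat r).card ≤ 8*r + 4 := by
  have h1 : (runO r).card = 4*r + 1 := by
    rw [runO, Nat.card_Icc]; omega
  have h2 : (apO r).card ≤ r := le_trans Finset.card_image_le (by rw [Nat.card_Icc]; omega)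
  have h3 : (frontZ).card ≤ 3 := by
    refine le_trans (Finset.card_insert_le _ _) ?_
    refine Nat.succ_le_succ (le_trans (Finset.card_insert_le _ _) ?_)
    simp
  have h4 : (apZ r).card ≤ 3*r := by
    refine le_trans Finset.card_image_le ?_
    rw [Finset.card_product, Nat.card_Icc, Nat.card_Icc]
    omega
  calc (Spat r).card ≤ (Opat r).card + (Zpat r).card := Finset.card_union_le _ _
  _ ≤ ((runO r).card + (apO r).card) + ((frontZ).card + (apZ r).card) :=
      Nat.add_le_add (Finset.card_union_le _ _) (Finset.card_union_le _ _)
  _ ≤ (4*r+1 + r) + (3 + 3*r) := by omega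
  _ = 8*r + 4 := by ring

lemma Spat_nonempty : (Spat r).Nonempty :=
  ⟨3, O_sub_S (Finset.mem_union_left _ ((mem_runO r).mpr (by omega)))⟩


/-! ### factor patterns over `ZMod M` -/

lemma cb_lt (M : ℕ) : M < (cb M + 1)^3 := by
  by_contra h
  push_neg at h
  have := le_cb h
  omega

lemma castinj {M : ℕ} [NeZero M] {a b : ℕ} (ha : a < M) (hb : b < M)
    (h : (a : ZMod M) = b) : a = b := by
  have := congrArg ZMod.val h
  rwa [ZMod.val_natCast_of_lt ha, ZMod.val_natCast_of_lt hb] at this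

structure FactorPat (M : ℕ) [NeZero M] where
  S : Finset (ZMod M)
  v : ZMod M → Bool
  Sm : ZMod M → Prop
  Box : Finset (ZMod M)
  tt : ℕ
  hne : S.Nonempty
  hagree : ∀ d, Sm d → ∃ q, q ∈ S ∧ q + d ∈ S ∧ v (q + d) = v q
  hgood : ∀ d, Sm d → d ≠ 0 → C3 S v d ∨ TI S v d
  hboxsm : ∀ c ∈ Box, ∀ c' ∈ Box, Sm (c - c')
  hMbox : M ≤ Box.card * tt
  htt : tt^3 ≤ 1000000 * M
  hS : S.card^3 ≤ 1000000 * M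

/-- the trivial (full-support, constant) pattern for small factors -/
def smallFactor (M : ℕ) [NeZero M] (hM : M < 1000) : FactorPat M where
  S := Finset.univ
  v := fun _ => false
  Sm := fun _ => True
  Box := Finset.univ
  tt := 1
  hne := ⟨0, Finset.mem_univ 0⟩
  hagree := fun d _ => ⟨0, Finset.mem_univ _, Finset.mem_univ _, rfl⟩
  hgood := fun d _ _ => Or.inr ⟨fun q => iff_of_true (Finset.mem_univ q) (Finset.mem_univ _),
    fun _ => rfl⟩
  hboxsm := fun _ _ _ _ => trivial
  hMbox := by rw [Finset.card_univ, ZMod.card]; omega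
  htt := by have := Nat.pos_of_ne_zero (NeZero.ne M); omega
  hS := by
    rw [Finset.card_univ, ZMod.card]
    have h1 : M*M ≤ 999*999 := Nat.mul_le_mul (by omega) (by omega)
    calc M^3 = M*M*M := by ring
    _ ≤ 999*999*M := Nat.mul_le_mul_right M h1
    _ ≤ 1000000*M := Nat.mul_le_mul_right M (by norm_num)

section LargeFactor

variable (M : ℕ) [NeZero M]

lemma cb10 (hM : 1000 ≤ M) : 10 ≤ cb M := le_cb (by norm_num; omega)

lemma cbB0 (hM : 1000 ≤ M) : 2*(cb M * cb M) + 4*(cb M) + 6 < M := by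
  have h3 : (cb M)^3 ≤ M := cb_cube_le M
  have he : (cb M)^3 = cb M*(cb M*cb M) := by ring
  have h10 : 10 ≤ cb M := cb10 M hM
  have h1 : 10*(cb M*cb M) ≤ cb M*(cb M*cb M) := Nat.mul_le_mul_right _ h10
  have h2 : 10*cb M ≤ cb M*cb M := Nat.mul_le_mul_right _ h10
  omega

def LS : Finset (ZMod M) := (Spat (cb M)).image (Nat.cast)
def LO : Finset (ZMod M) := (Opat (cb M)).image (Nat.cast)
def Lv : ZMod M → Bool := fun z => decide (z ∈ LO M)
def LSm : ZMod M → Prop := fun d => ∃ t : ℕ, t ≤ cb M * cb M ∧ (d = (t:ZMod M) ∨ d = -(t:ZMod M))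
def LBox : Finset (ZMod M) := (Finset.range (cb M * cb M + 1)).image (Nat.cast)

lemma Opat_le {a : ℕ} (h : a ∈ Opat (cb M)) : a ≤ cb M*cb M + 4*cb M + 6 :=
  Spat_le (O_sub_S h)

lemma mem_LO (hM : 1000 ≤ M) {a : ℕ} (ha : a < M) : (a : ZMod M) ∈ LO M ↔ a ∈ Opat (cb M) := by
  constructor
  · rintro h
    obtain ⟨s, hs, heq⟩ := Finset.mem_image.mp h
    have hsle : s < M := by have := Opat_le M hs; have := cbB0 M hM; omega
    rwa [← castinj hsle ha heq]
  · intro h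
    exact Finset.mem_image.mpr ⟨a, h, rfl⟩

lemma mem_LS_of {a : ℕ} (h : a ∈ Spat (cb M)) : (a : ZMod M) ∈ LS M :=
  Finset.mem_image.mpr ⟨a, h, rfl⟩

lemma Lv_true {a : ℕ} (h : a ∈ Opat (cb M)) : Lv M (a : ZMod M) = true := by
  simp only [Lv, decide_eq_true_eq]
  exact Finset.mem_image.mpr ⟨a, h, rfl⟩

lemma Lv_cast_ne (hM : 1000 ≤ M) {a b : ℕ} (ha : a < M) (hb : b < M)
    (h : ¬ (a ∈ Opat (cb M) ↔ b ∈ Opat (cb M))) : Lv M (a : ZMod M) ≠ Lv M (b : ZMod M) := by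
  simp only [Lv, ne_eq, decide_eq_decide]
  intro hiff
  exact h ((mem_LO M hM ha).symm.trans (hiff.trans (mem_LO M hM hb)))

/-- the large-factor pattern -/
def largeFactor (hM : 1000 ≤ M) : FactorPat M where
  S := LS M
  v := Lv M
  Sm := LSm M
  Box := LBox M
  tt := 8 * cb M
  hne := Finset.Nonempty.image Spat_nonempty _
  hagree := by
    intro d hd
    obtain ⟨t, ht, hor⟩ := hd
    have hB0 := cbB0 M hM
    have hr4 : 4 ≤ cb M := by have := cb10 M hM; omega
    rcases Nat.eq_zero_or_pos t with ht0 | ht0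
    · subst ht0
      have hd0 : d = 0 := by
        rcases hor with h | h <;> simp [h]
      have h3r : (3:ℕ) ∈ runO (cb M) := (mem_runO (cb M)).mpr (by omega)
      have h3S : ((3:ℕ) : ZMod M) ∈ LS M := mem_LS_of M (O_sub_S (Finset.mem_union_left _ h3r))
      exact ⟨((3:ℕ) : ZMod M), h3S, by rw [hd0, add_zero]; exact h3S, by rw [hd0, add_zero]⟩
    · obtain ⟨q, hqO, hqtO⟩ := agreeNat hr4 ht0 ht
      have hq1 : q < M := by have := Opat_le M hqO; omega
      have hq2 : q + t < M := by have := Opat_le M hqtO; omega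
      rcases hor with h | h
      · refine ⟨(q : ZMod M), mem_LS_of M (O_sub_S hqO), ?_, ?_⟩
        · rw [h, ← Nat.cast_add]
          exact mem_LS_of M (O_sub_S hqtO)
        · rw [h, ← Nat.cast_add, Lv_true M hqtO, Lv_true M hqO]
      · have hcast : ((q + t : ℕ) : ZMod M) + -(t : ZMod M) = ((q:ℕ) : ZMod M) := by
          push_cast; ring
        refine ⟨((q + t : ℕ) : ZMod M), mem_LS_of M (O_sub_S hqtO), ?_, ?_⟩
        · rw [h, hcast]
          exact mem_LS_of M (O_sub_S hqO)
        · rw [h, hcast, Lv_true M hqtO, Lv_true M hqO]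
  hgood := by
    intro d hd hd0
    obtain ⟨t, ht, hor⟩ := hd
    have hB0 := cbB0 M hM
    have hr4 : 4 ≤ cb M := by have := cb10 M hM; omega
    rcases Nat.eq_zero_or_pos t with ht0 | ht0
    · exfalso; apply hd0; subst ht0; rcases hor with h | h <;> simp [h]
    obtain ⟨q1, q2, q3, h12, h13, h23, hc1, hc2, hc3⟩ := conflNat hr4 ht0 ht
    left
    have hbnd : ∀ {q : ℕ}, ConflP (cb M) t q → q < M ∧ q + t < M := by
      intro q hc
      constructor
      · have := Spat_le hc.1; omega
      · have := Spat_le hc.2.1; omega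
    have key : ∀ {q : ℕ}, ConflP (cb M) t q →
        ((q : ZMod M) ∈ LS M ∧ ((q + t : ℕ) : ZMod M) ∈ LS M ∧
          Lv M ((q + t : ℕ) : ZMod M) ≠ Lv M (q : ZMod M)) := by
      intro q hc
      obtain ⟨hb1, hb2⟩ := hbnd hc
      exact ⟨mem_LS_of M hc.1, mem_LS_of M hc.2.1,
        Lv_cast_ne M hM hb2 hb1 (fun hiff => hc.2.2 hiff.symm)⟩
    obtain ⟨hb11, hb12⟩ := hbnd hc1
    obtain ⟨hb21, hb22⟩ := hbnd hc2
    obtain ⟨hb31, hb32⟩ := hbnd hc3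
    rcases hor with h | h
    · refine ⟨(q1 : ZMod M), (q2 : ZMod M), (q3 : ZMod M),
        fun he => h12 (castinj hb11 hb21 he), fun he => h13 (castinj hb11 hb31 he),
        fun he => h23 (castinj hb21 hb31 he), ?_⟩
      rintro Q (rfl | rfl | rfl)
      · obtain ⟨m1, m2, m3⟩ := key hc1
        exact ⟨m1, by rw [h, ← Nat.cast_add]; exact m2, by rw [h, ← Nat.cast_add]; exact m3⟩
      · obtain ⟨m1, m2, m3⟩ := key hc2
        exact ⟨m1, by rw [h, ← Nat.cast_add]; exact m2, by rw [h, ← Nat.cast_add]; exact m3⟩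
      · obtain ⟨m1, m2, m3⟩ := key hc3
        exact ⟨m1, by rw [h, ← Nat.cast_add]; exact m2, by rw [h, ← Nat.cast_add]; exact m3⟩
    · refine ⟨((q1 + t : ℕ) : ZMod M), ((q2 + t : ℕ) : ZMod M), ((q3 + t : ℕ) : ZMod M),
        fun he => h12 (by have := castinj hb12 hb22 he; omega),
        fun he => h13 (by have := castinj hb12 hb32 he; omega),
        fun he => h23 (by have := castinj hb22 hb32 he; omega), ?_⟩
      rintro Q (rfl | rfl | rfl)
      · obtain ⟨m1, m2, m3⟩ := key hc1
        have hcast : ((q1 + t : ℕ) : ZMod M) + -(t : ZMod M) = ((q1:ℕ) : ZMod M) := by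
          push_cast; ring
        refine ⟨m2, ?_, ?_⟩
        · rw [h, hcast]; exact m1
        · rw [h, hcast]; exact fun he => m3 he.symm
      · obtain ⟨m1, m2, m3⟩ := key hc2
        have hcast : ((q2 + t : ℕ) : ZMod M) + -(t : ZMod M) = ((q2:ℕ) : ZMod M) := by
          push_cast; ring
        refine ⟨m2, ?_, ?_⟩
        · rw [h, hcast]; exact m1
        · rw [h, hcast]; exact fun he => m3 he.symm
      · obtain ⟨m1, m2, m3⟩ := key hc3
        have hcast : ((q3 + t : ℕ) : ZMod M) + -(t : ZMod M) = ((q3:ℕ) : ZMod M) := by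
          push_cast; ring
        refine ⟨m2, ?_, ?_⟩
        · rw [h, hcast]; exact m1
        · rw [h, hcast]; exact fun he => m3 he.symm
  hboxsm := by
    intro c hc c' hc'
    obtain ⟨a, ha, rfl⟩ := Finset.mem_image.mp hc
    obtain ⟨b, hb, rfl⟩ := Finset.mem_image.mp hc'
    rw [Finset.mem_range] at ha hb
    rcases le_total b a with hba | hab
    · exact ⟨a - b, by omega, Or.inl (by rw [Nat.cast_sub hba])⟩
    · exact ⟨b - a, by omega, Or.inr (by rw [Nat.cast_sub hab]; ring)⟩
  hMbox := by
    have hB0 := cbB0 M hM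
    have hcard : (LBox M).card = cb M * cb M + 1 := by
      rw [LBox, Finset.card_image_of_injOn, Finset.card_range]
      intro a ha b hb h
      rw [Finset.mem_coe, Finset.mem_range] at ha hb
      exact castinj (by omega) (by omega) h
    rw [hcard]
    have h1 : (cb M + 1)^3 ≤ (2*cb M)^3 := Nat.pow_le_pow_left (by have := cb10 M hM; omega) 3
    have h2 : (2*cb M)^3 = 8*(cb M*(cb M*cb M)) := by ring
    have h3 : (cb M*cb M+1)*(8*cb M) = 8*(cb M*(cb M*cb M)) + 8*cb M := by ring
    have h4 := cb_lt M
    omega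
  htt := by
    have h3 : (cb M)^3 ≤ M := cb_cube_le M
    have he : (8*cb M)^3 = 512*((cb M)^3) := by ring
    have h5 : 512*((cb M)^3) ≤ 512*M := Nat.mul_le_mul_left _ h3
    omega
  hS := by
    have hcard : (LS M).card ≤ 8*cb M + 4 := le_trans Finset.card_image_le Spat_card
    have h1 : (LS M).card^3 ≤ (12*cb M)^3 :=
      Nat.pow_le_pow_left (by have := cb10 M hM; omega) 3
    have h2 : (12*cb M)^3 = 1728*((cb M)^3) := by ring
    have h3 : (cb M)^3 ≤ M := cb_cube_le M
    have h4 : 1728*((cb M)^3) ≤ 1728*M := Nat.mul_le_mul_left _ h3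
    omega

end LargeFactor


/-! ### the product pattern -/

section Glob

variable {l : ℕ} {m : Fin l → ℕ} [∀ i, NeZero (m i)] (P : ∀ i, FactorPat (m i))

def SG : Finset ((i : Fin l) → ZMod (m i)) := Fintype.piFinset fun i => (P i).S

def vG : ((i : Fin l) → ZMod (m i)) → Bool :=
  fun a => decide ((Finset.univ.filter fun i => (P i).v (a i) = true).card % 2 = 1)

def SmG : ((i : Fin l) → ZMod (m i)) → Prop := fun d => ∀ i, (P i).Sm (d i)

def BoxG : Finset ((i : Fin l) → ZMod (m i)) := Fintype.piFinset fun i => (P i).Box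

lemma parity_flip {T T' : Finset (Fin l)} (i0 : Fin l)
    (hsame : ∀ i, i ≠ i0 → (i ∈ T ↔ i ∈ T')) (hdiff : ¬ (i0 ∈ T ↔ i0 ∈ T')) :
    ¬ (T.card % 2 = T'.card % 2) := by
  by_cases h : i0 ∈ T
  · have h' : i0 ∉ T' := fun hh => hdiff (iff_of_true h hh)
    have hE : T' = T.erase i0 := by
      ext i
      rw [Finset.mem_erase]
      constructor
      · intro hi
        have hne : i ≠ i0 := fun he => h' (he ▸ hi)
        exact ⟨hne, (hsame i hne).mpr hi⟩
      · rintro ⟨hne, hi⟩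
        exact (hsame i hne).mp hi
    rw [hE, Finset.card_erase_of_mem h]
    have : 1 ≤ T.card := Finset.card_pos.mpr ⟨i0, h⟩
    omega
  · have h' : i0 ∈ T' := by
      by_contra hh
      exact hdiff (iff_of_false h hh)
    have hE : T = T'.erase i0 := by
      ext i
      rw [Finset.mem_erase]
      constructor
      · intro hi
        have hne : i ≠ i0 := fun he => h (he ▸ hi)
        exact ⟨hne, (hsame i hne).mp hi⟩
      · rintro ⟨hne, hi⟩
        exact (hsame i hne).mpr hi
    rw [hE, Finset.card_erase_of_mem h']
    have : 1 ≤ T'.card := Finset.card_pos.mpr ⟨i0, h'⟩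
    omega

lemma vG_ne {a b : (i : Fin l) → ZMod (m i)} (i0 : Fin l)
    (hsame : ∀ i, i ≠ i0 → (P i).v (a i) = (P i).v (b i))
    (hdiff : (P i0).v (a i0) ≠ (P i0).v (b i0)) : vG P a ≠ vG P b := by
  simp only [vG, ne_eq, decide_eq_decide]
  intro hiff
  have pf := parity_flip (T := Finset.univ.filter fun i => (P i).v (a i) = true)
    (T' := Finset.univ.filter fun i => (P i).v (b i) = true) i0 ?_ ?_
  · set c1 := (Finset.univ.filter fun i => (P i).v (a i) = true).card
    set c2 := (Finset.univ.filter fun i => (P i).v (b i) = true).card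
    rcases Nat.mod_two_eq_zero_or_one c1 with h1 | h1 <;>
      rcases Nat.mod_two_eq_zero_or_one c2 with h2 | h2
    · exact pf (h1.trans h2.symm)
    · have := hiff.mpr h2; omega
    · have := hiff.mp h1; omega
    · exact pf (h1.trans h2.symm)
  · intro i hne
    simp only [Finset.mem_filter, Finset.mem_univ, true_and, hsame i hne]
  · simp only [Finset.mem_filter, Finset.mem_univ, true_and]
    intro hf
    cases ha : (P i0).v (a i0) <;> cases hb : (P i0).v (b i0)
    · exact hdiff (ha.trans hb.symm)
    · have := hf.mpr hb; rw [ha] at this; exact Bool.false_ne_true this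
    · have := hf.mp ha; rw [hb] at this; exact Bool.false_ne_true this
    · exact hdiff (ha.trans hb.symm)

lemma vG_congr {a b : (i : Fin l) → ZMod (m i)}
    (h : ∀ i, (P i).v (a i) = (P i).v (b i)) : vG P a = vG P b := by
  simp only [vG, decide_eq_decide]
  have : (Finset.univ.filter fun i => (P i).v (a i) = true)
      = (Finset.univ.filter fun i => (P i).v (b i) = true) := by
    apply Finset.filter_congr
    intro i _
    rw [h i]
  rw [this]

lemma goodG : ∀ d, SmG P d → d ≠ 0 → C3 (SG P) (vG P) d ∨ TI (SG P) (vG P) d := by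
  intro d hsm hd
  by_cases hc : ∃ i, C3 ((P i).S) ((P i).v) (d i)
  · obtain ⟨i0, hC⟩ := hc
    left
    have hbase : ∀ i, ∃ q, q ∈ (P i).S ∧ q + d i ∈ (P i).S ∧ (P i).v (q + d i) = (P i).v q :=
      fun i => (P i).hagree (d i) (hsm i)
    choose qb hqb1 hqb2 hqb3 using hbase
    obtain ⟨q1, q2, q3, h12, h13, h23, hq⟩ := hC
    have key : ∀ qq : ZMod (m i0), (qq = q1 ∨ qq = q2 ∨ qq = q3) →
        Function.update qb i0 qq ∈ SG P ∧ Function.update qb i0 qq + d ∈ SG P ∧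
          vG P (Function.update qb i0 qq + d) ≠ vG P (Function.update qb i0 qq) := by
      intro qq hqq
      obtain ⟨hm1, hm2, hm3⟩ := hq qq hqq
      refine ⟨?_, ?_, ?_⟩
      · rw [SG, Fintype.mem_piFinset]
        intro i
        by_cases hi : i = i0
        · subst hi; rw [Function.update_self]; exact hm1
        · rw [Function.update_of_ne hi]; exact hqb1 i
      · rw [SG, Fintype.mem_piFinset]
        intro i
        rw [Pi.add_apply]
        by_cases hi : i = i0
        · subst hi; rw [Function.update_self]; exact hm2
        · rw [Function.update_of_ne hi]; exact hqb2 i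
      · refine vG_ne P i0 ?_ ?_
        · intro i hne
          rw [Pi.add_apply, Function.update_of_ne hne]
          exact hqb3 i
        · simp only [Pi.add_apply, Function.update_self]
          exact hm3
    refine ⟨Function.update qb i0 q1, Function.update qb i0 q2, Function.update qb i0 q3,
      ?_, ?_, ?_, ?_⟩
    · intro he
      apply h12
      have := congrFun he i0
      simpa only [Function.update_self] using this
    · intro he
      apply h13
      have := congrFun he i0
      simpa only [Function.update_self] using this
    · intro he
      apply h23
      have := congrFun he i0
      simpa only [Function.update_self] using this
    · rintro Q (rfl | rfl | rfl)
      · exact key q1 (Or.inl rfl)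
      · exact key q2 (Or.inr (Or.inl rfl))
      · exact key q3 (Or.inr (Or.inr rfl))
  · right
    have hTI : ∀ i, d i ≠ 0 → TI ((P i).S) ((P i).v) (d i) := by
      intro i hdi
      rcases (P i).hgood (d i) (hsm i) hdi with h | h
      · exact absurd ⟨i, h⟩ hc
      · exact h
    constructor
    · intro q
      rw [SG, Fintype.mem_piFinset, Fintype.mem_piFinset]
      apply forall_congr'
      intro i
      rw [Pi.add_apply]
      by_cases hdi : d i = 0
      · rw [hdi, add_zero]
      · exact (hTI i hdi).1 (q i)
    · intro q
      apply vG_congr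
      intro i
      rw [Pi.add_apply]
      by_cases hdi : d i = 0
      · rw [hdi, add_zero]
      · exact (hTI i hdi).2 (q i)

lemma boxsmG : ∀ c ∈ BoxG P, ∀ c' ∈ BoxG P, SmG P (c - c') := by
  intro c hc c' hc' i
  rw [BoxG, Fintype.mem_piFinset] at hc hc'
  rw [Pi.sub_apply]
  exact (P i).hboxsm _ (hc i) _ (hc' i)

lemma SG_nonempty : (SG P).Nonempty := by
  have h : ∀ i, ∃ q, q ∈ (P i).S := fun i => (P i).hne
  choose q0 hq0 using h
  exact ⟨q0, by rw [SG, Fintype.mem_piFinset]; exact hq0⟩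

lemma boxG_pos : 0 < (BoxG P).card := by
  rw [BoxG, Fintype.card_piFinset]
  apply Finset.prod_pos
  intro i _
  have h1 := (P i).hMbox
  have h2 := Nat.pos_of_ne_zero (NeZero.ne (m i))
  by_contra hz
  push_neg at hz
  interval_cases h : ((P i).Box.card)
  · simp at h1; omega

lemma cardA_eq : Fintype.card ((i : Fin l) → ZMod (m i)) = ∏ i, m i := by
  rw [Fintype.card_pi]
  apply Finset.prod_congr rfl
  intro i _
  exact ZMod.card (m i)

lemma cardA_le : Fintype.card ((i : Fin l) → ZMod (m i)) ≤ (BoxG P).card * ∏ i, (P i).tt := by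
  rw [cardA_eq, BoxG, Fintype.card_piFinset, ← Finset.prod_mul_distrib]
  exact Finset.prod_le_prod' fun i _ => (P i).hMbox

lemma sens_glob :
    sensitivity (mt (SG P) (vG P)) ≤ max (SG P).card (∏ i, (P i).tt) :=
  sens_mt_le (SmG P) (BoxG P) (∏ i, (P i).tt) (goodG P) (boxsmG P) (boxG_pos P) (cardA_le P)

lemma cube_bound :
    (max (SG P).card (∏ i, (P i).tt))^3 ≤ 1000000^l * ∏ i, m i := by
  have haux : ∀ f : Fin l → ℕ, (∀ i, (f i)^3 ≤ 1000000 * m i) →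
      (∏ i, f i)^3 ≤ 1000000^l * ∏ i, m i := by
    intro f hf
    rw [← Finset.prod_pow]
    calc ∏ i, (f i)^3 ≤ ∏ i, (1000000 * m i) := Finset.prod_le_prod' fun i _ => hf i
    _ = 1000000^l * ∏ i, m i := by
        rw [Finset.prod_mul_distrib, Finset.prod_const, Finset.card_univ, Fintype.card_fin]
  rcases max_cases ((SG P).card) (∏ i, (P i).tt) with ⟨he, _⟩ | ⟨he, _⟩ <;> rw [he]
  · rw [SG, Fintype.card_piFinset]
    exact haux _ fun i => (P i).hS
  · exact haux _ fun i => (P i).htt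

end Glob

/-! ### transport along a regular action -/

lemma sensAt_comp {κ ι : Type} [Fintype κ] [DecidableEq κ] [Fintype ι] [DecidableEq ι]
    (e : κ ≃ ι) (F : (κ → Bool) → Bool) (x : ι → Bool) :
    sensAt (fun y => F (fun a => y (e a))) x = sensAt F (fun a => x (e a)) := by
  have hupd : ∀ (i : ι) (c : Bool),
      (fun a => (Function.update x i c) (e a)) = Function.update (fun a => x (e a)) (e.symm i) c := by
    intro i c
    funext a
    rw [Function.update_apply, Function.update_apply]
    rcases Classical.em (e a = i) with h | h
    · rw [if_pos h, if_pos ((Equiv.eq_symm_apply e).mpr h)]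
    · rw [if_neg h, if_neg (fun hh => h ((Equiv.eq_symm_apply e).mp hh))]
  unfold sensAt
  apply Finset.card_bij' (i := fun i _ => e.symm i) (j := fun a _ => e a)
  · intro i hi
    rw [Finset.mem_filter] at hi ⊢
    refine ⟨Finset.mem_univ _, ?_⟩
    have h2 : F (fun a => Function.update x i (!x i) (e a)) ≠ F (fun a => x (e a)) := hi.2
    rw [hupd i (!x i)] at h2
    show F (Function.update (fun a => x (e a)) (e.symm i) (!x (e (e.symm i)))) ≠ F (fun a => x (e a))
    rw [Equiv.apply_symm_apply]
    exact h2
  · intro a ha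
    rw [Finset.mem_filter] at ha ⊢
    refine ⟨Finset.mem_univ _, ?_⟩
    have h2 : F (Function.update (fun b => x (e b)) a (!x (e a))) ≠ F (fun b => x (e b)) := ha.2
    show F (fun b => Function.update x (e a) (!x (e a)) (e b)) ≠ F (fun b => x (e b))
    rw [hupd (e a) (!x (e a)), Equiv.symm_apply_apply]
    exact h2
  · intro i _; exact Equiv.apply_symm_apply e i
  · intro a _; exact Equiv.symm_apply_apply e a

lemma sens_comp {κ ι : Type} [Fintype κ] [DecidableEq κ] [Fintype ι] [DecidableEq ι]
    (e : κ ≃ ι) (F : (κ → Bool) → Bool) :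
    sensitivity (fun y => F (fun a => y (e a))) ≤ sensitivity F := by
  apply Finset.sup_le
  intro x _
  rw [sensAt_comp]
  exact Finset.le_sup (Finset.mem_univ _)


/-! ### regular action of an abelian transitive group -/

lemma transport {n : ℕ} (hn : 0 < n) (G : Subgroup (Equiv.Perm (Fin n)))
    (htrans : ∀ i j : Fin n, ∃ σ ∈ G, σ i = j)
    (hcomm : ∀ a b : G, a * b = b * a)
    {l : ℕ} {m : Fin l → ℕ}
    (e : G ≃* ((i : Fin l) → Multiplicative (ZMod (m i)))) :
    ∃ φ : ((i : Fin l) → ZMod (m i)) ≃ Fin n,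
      ∀ σ ∈ G, ∃ g, ∀ a, σ (φ a) = φ (g + a) := by
  classical
  set i0 : Fin n := ⟨0, hn⟩ with hi0
  set ψ : ((i : Fin l) → ZMod (m i)) → G :=
    fun a => e.symm (fun i => Multiplicative.ofAdd (a i)) with hψ
  have hψmul : ∀ a b, ψ (a + b) = ψ a * ψ b := by
    intro a b
    rw [hψ]
    show e.symm _ = e.symm _ * e.symm _
    rw [← map_mul]
    congr 1
  have hψinj : Function.Injective ψ := by
    intro a b hab
    rw [hψ] at hab
    have h2 := congrArg e hab
    rw [MulEquiv.apply_symm_apply, MulEquiv.apply_symm_apply] at h2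
    funext i
    exact congrFun h2 i
  have hψG : ∀ (σ : Equiv.Perm (Fin n)) (hσ : σ ∈ G),
      ψ (fun i => Multiplicative.toAdd (e ⟨σ, hσ⟩ i)) = ⟨σ, hσ⟩ := by
    intro σ hσ
    show e.symm (fun i => Multiplicative.ofAdd (Multiplicative.toAdd (e ⟨σ, hσ⟩ i))) = ⟨σ, hσ⟩
    have h1 : (fun i => Multiplicative.ofAdd (Multiplicative.toAdd (e ⟨σ, hσ⟩ i)))
        = e ⟨σ, hσ⟩ := by
      funext i; rfl
    rw [h1, MulEquiv.symm_apply_apply]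
  have hstab : ∀ (τ : G) (p : Fin n), (τ : Equiv.Perm (Fin n)) p = p → τ = 1 := by
    intro τ p hp
    have hperm : (τ : Equiv.Perm (Fin n)) = 1 := by
      apply Equiv.ext
      intro j
      obtain ⟨ρ, hρG, hρ⟩ := htrans p j
      have hcom := hcomm τ ⟨ρ, hρG⟩
      have h1 : (τ : Equiv.Perm (Fin n)) j = ((τ * ⟨ρ, hρG⟩ : G) : Equiv.Perm (Fin n)) p := by
        rw [← hρ]
        rfl
      have h2 : ((⟨ρ, hρG⟩ * τ : G) : Equiv.Perm (Fin n)) p = ρ ((τ : Equiv.Perm (Fin n)) p) := rfl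
      rw [h1, hcom, h2, hp, hρ]
      rfl
    exact Subtype.ext hperm
  set φf : ((i : Fin l) → ZMod (m i)) → Fin n := fun a => (ψ a : Equiv.Perm (Fin n)) i0 with hφf
  have hinj : Function.Injective φf := by
    intro a b hab
    have hab' : (ψ a : Equiv.Perm (Fin n)) i0 = (ψ b : Equiv.Perm (Fin n)) i0 := hab
    have hτ : ((ψ a * (ψ b)⁻¹ : G) : Equiv.Perm (Fin n)) ((ψ b : Equiv.Perm (Fin n)) i0)
        = (ψ b : Equiv.Perm (Fin n)) i0 := by
      have h3 : ((ψ a * (ψ b)⁻¹ : G) : Equiv.Perm (Fin n)) ((ψ b : Equiv.Perm (Fin n)) i0)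
          = ((ψ a * (ψ b)⁻¹ * ψ b : G) : Equiv.Perm (Fin n)) i0 := rfl
      rw [h3, inv_mul_cancel_right]
      exact hab'
    have h4 := hstab _ _ hτ
    have h5 : ψ a = ψ b := by
      have h6 : ψ a * (ψ b)⁻¹ * ψ b = 1 * ψ b := by rw [h4]
      rwa [inv_mul_cancel_right, one_mul] at h6
    exact hψinj h5
  have hsurj : Function.Surjective φf := by
    intro j
    obtain ⟨σ, hσG, hσ⟩ := htrans i0 j
    refine ⟨fun i => Multiplicative.toAdd (e ⟨σ, hσG⟩ i), ?_⟩
    show ((ψ (fun i => Multiplicative.toAdd (e ⟨σ, hσG⟩ i)) : G) : Equiv.Perm (Fin n)) i0 = j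
    rw [hψG σ hσG]
    exact hσ
  refine ⟨Equiv.ofBijective φf ⟨hinj, hsurj⟩, ?_⟩
  intro σ hσ
  refine ⟨fun i => Multiplicative.toAdd (e ⟨σ, hσ⟩ i), fun a => ?_⟩
  show σ (φf a) = φf ((fun i => Multiplicative.toAdd (e ⟨σ, hσ⟩ i)) + a)
  have h8 : ψ ((fun i => Multiplicative.toAdd (e ⟨σ, hσ⟩ i)) + a)
      = ψ (fun i => Multiplicative.toAdd (e ⟨σ, hσ⟩ i)) * ψ a := hψmul _ _
  show σ ((ψ a : Equiv.Perm (Fin n)) i0)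
      = (ψ ((fun i => Multiplicative.toAdd (e ⟨σ, hσ⟩ i)) + a) : Equiv.Perm (Fin n)) i0
  rw [h8, hψG σ hσ]
  rfl

/-! ### main theorem -/

theorem main_thm (l : ℕ) :
    ∃ α : ℝ, 0 < α ∧ ∀ n : ℕ, 0 < n → ∀ G : Subgroup (Equiv.Perm (Fin n)),
      (∀ i j : Fin n, ∃ σ ∈ G, σ i = j) →
      (∀ a b : G, a * b = b * a) →
      (∃ m : Fin l → ℕ, Nonempty (G ≃* ((i : Fin l) → Multiplicative (ZMod (m i))))) →
      ∃ f : (Fin n → Bool) → Bool,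
        (∀ σ ∈ G, ∀ x : Fin n → Bool, f (fun i => x (σ i)) = f x) ∧
        (∃ x y, f x ≠ f y) ∧
        (sensitivity f : ℝ) ≤ α * (n : ℝ) ^ ((1 : ℝ) / 3) := by
  refine ⟨(10:ℝ)^(2*l), by positivity, ?_⟩
  intro n hn G htrans hcomm hiso
  obtain ⟨m, ⟨e⟩⟩ := hiso
  haveI hNZ : ∀ i, NeZero (m i) := by
    intro i
    constructor
    intro h0
    haveI hinfZ : Infinite (ZMod (m i)) := by
      rw [h0]
      exact (inferInstance : Infinite ℤ)
    have hfin : Finite ((j : Fin l) → Multiplicative (ZMod (m j))) := Finite.of_equiv G e.toEquiv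
    have hsurj : Function.Surjective
        (fun f : ((j : Fin l) → Multiplicative (ZMod (m j))) => f i) := by
      intro y
      refine ⟨Function.update (fun _ => 1) i y, ?_⟩
      simp
    have hfin2 : Finite (Multiplicative (ZMod (m i))) := Finite.of_surjective _ hsurj
    haveI hinfM : Infinite (Multiplicative (ZMod (m i))) :=
      Infinite.of_injective (Multiplicative.ofAdd) (Equiv.injective _)
    haveI := hfin2
    exact not_finite (Multiplicative (ZMod (m i)))
  obtain ⟨φ, hφ⟩ := transport hn G htrans hcomm e
  set P : ∀ i, FactorPat (m i) :=
    fun i => if h : 1000 ≤ m i then largeFactor (m i) h else smallFactor (m i) (by omega)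
    with hP
  refine ⟨fun x => mt (SG P) (vG P) (fun a => x (φ a)), ?_, ?_, ?_⟩
  · intro σ hσ x
    obtain ⟨g, hg⟩ := hφ σ hσ
    show mt (SG P) (vG P) (fun a => x (σ (φ a))) = mt (SG P) (vG P) (fun a => x (φ a))
    rw [show (fun a => x (σ (φ a))) = (fun a => (fun b => x (φ b)) (g + a)) from
      funext fun a => by rw [hg a]]
    exact mt_shift g (fun b => x (φ b))
  · obtain ⟨x0, y0, hxy⟩ := mt_nonconstant (v := vG P) (SG_nonempty P)
    refine ⟨fun i => x0 (φ.symm i), fun i => y0 (φ.symm i), ?_⟩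
    show mt (SG P) (vG P) (fun a => x0 (φ.symm (φ a))) ≠ mt (SG P) (vG P) (fun a => y0 (φ.symm (φ a)))
    have h1 : (fun a => x0 (φ.symm (φ a))) = x0 := funext fun a => by rw [Equiv.symm_apply_apply]
    have h2 : (fun a => y0 (φ.symm (φ a))) = y0 := funext fun a => by rw [Equiv.symm_apply_apply]
    rw [h1, h2]
    exact hxy
  · have hsens : sensitivity (fun x : Fin n → Bool => mt (SG P) (vG P) (fun a => x (φ a)))
        ≤ max (SG P).card (∏ i, (P i).tt) :=
      le_trans (sens_comp φ (mt (SG P) (vG P))) (sens_glob P)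
    have hn_eq : ∏ i, m i = n := by
      have hcc := Fintype.card_congr φ
      rw [Fintype.card_fin] at hcc
      rw [← cardA_eq, hcc]
    have hpoweq : (1000000:ℕ)^l = (10^(2*l))^3 := by
      have h10 : (1000000:ℕ) = 10^6 := by norm_num
      rw [h10, ← pow_mul, ← pow_mul]
      congr 1
      ring
    have hB3 : (max (SG P).card (∏ i, (P i).tt))^3 ≤ (10^(2*l))^3 * n := by
      calc (max (SG P).card (∏ i, (P i).tt))^3 ≤ 1000000^l * ∏ i, m i := cube_bound P
      _ = (10^(2*l))^3 * n := by rw [hpoweq, hn_eq]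
    have h0 : (0:ℝ) ≤ (10:ℝ)^(2*l) * (n:ℝ) ^ ((1:ℝ)/3) := by positivity
    refine le_of_pow_le_pow_left₀ (n := 3) (by norm_num) h0 ?_
    have hc : ((10:ℝ)^(2*l) * (n:ℝ) ^ ((1:ℝ)/3))^3 = ((10:ℝ)^(2*l))^3 * (n:ℝ) := by
      rw [mul_pow]
      congr 1
      rw [← Real.rpow_natCast ((n:ℝ) ^ ((1:ℝ)/3)) 3, ← Real.rpow_mul (by positivity)]
      norm_num
    rw [hc]
    set s := sensitivity (fun x : Fin n → Bool => mt (SG P) (vG P) (fun a => x (φ a)))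
    calc ((s:ℕ):ℝ)^3 = ((s^3 : ℕ) : ℝ) := by push_cast; ring
    _ ≤ (((max (SG P).card (∏ i, (P i).tt))^3 : ℕ) : ℝ) := by
        exact_mod_cast Nat.pow_le_pow_left hsens 3
    _ ≤ (((10^(2*l))^3 * n : ℕ) : ℝ) := by exact_mod_cast hB3
    _ = ((10:ℝ)^(2*l))^3 * (n:ℝ) := by push_cast; ring

end AbSens

/-- for any transitive Abelian G ≤ S_n that is a product of l cyclic
groups, there is a non-constant G-invariant Boolean function with sensitivity at most
α·n^{1/3}, where α depends only on l. -/
theorem abelian_invariant_low_sensitivity (l : ℕ) :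
    ∃ α : ℝ, 0 < α ∧ ∀ n : ℕ, 0 < n → ∀ G : Subgroup (Equiv.Perm (Fin n)),
      (∀ i j : Fin n, ∃ σ ∈ G, σ i = j) →
      (∀ a b : G, a * b = b * a) →
      (∃ m : Fin l → ℕ, Nonempty (G ≃* ((i : Fin l) → Multiplicative (ZMod (m i))))) →
      ∃ f : (Fin n → Bool) → Bool,
        (∀ σ ∈ G, ∀ x : Fin n → Bool, f (fun i => x (σ i)) = f x) ∧
        (∃ x y, f x ≠ f y) ∧
        (sensitivity f : ℝ) ≤ α * (n : ℝ) ^ ((1 : ℝ) / 3) := by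
  exact AbSens.main_thm l
end
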